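/- Progress for the fine-grained λF: if ∅ ⊢p e : τ, then either e is a value or there exists e′ with e ⇝ e′. -/
import Mathlib


namespace LambdaF

/-! ## Syntax and operational semantics of λF -/

/-- λF expressions.  A constant `const ι n` is the `n`-th constant of base type `ι`. -/
inductive Tm : Type where
  | const : Nat → Nat → Tm
  | var : String → Tm
  | lam : String → Tm → Tm
  | app : Tm → Tm → Tm
  | control : String → Tm → Tm
  | prompt : Tm → Tm

/-- Values `v ::= c | x | λx.e`. -/
inductive IsVal : Tm → Prop where
  | const (ι n : Nat) : IsVal (.const ι n)
  | var (x : String) : IsVal (.var x)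
  | lam (x : String) (e : Tm) : IsVal (.lam x e)

/-- Substitution `e[x := v]`. -/
def subst : Tm → String → Tm → Tm
  | .const ι n, _, _ => .const ι n
  | .var y, x, v => if y = x then v else .var y
  | .lam y e, x, v => if y = x then .lam y e else .lam y (subst e x v)
  | .app e₁ e₂, x, v => .app (subst e₁ x v) (subst e₂ x v)
  | .control k e, x, v => if k = x then .control k e else .control k (subst e x v)
  | .prompt e, x, v => .prompt (subst e x v)

/-- All variable names occurring in a term (free or bound). -/
def Tm.vars : Tm → List String
  | .const _ _ => []
  | .var y => [y]
  | .lam y e => y :: e.vars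
  | .app e₁ e₂ => e₁.vars ++ e₂.vars
  | .control k e => k :: e.vars
  | .prompt e => e.vars

/-- Pure evaluation contexts `F ::= [] | F e | v F`. -/
inductive PCtx : Type where
  | hole : PCtx
  | appL : PCtx → Tm → PCtx
  | appR : Tm → PCtx → PCtx

/-- Plugging an expression into a pure context. -/
def PCtx.plug : PCtx → Tm → Tm
  | .hole, e => e
  | .appL P e₂, e => .app (P.plug e) e₂
  | .appR v P, e => .app v (P.plug e)

/-- Well-formedness of pure contexts: in `v F`, `v` is a value. -/
inductive PCtx.Wf : PCtx → Prop where
  | hole : PCtx.Wf .hole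
  | appL (P : PCtx) (e : Tm) : PCtx.Wf P → PCtx.Wf (.appL P e)
  | appR (v : Tm) (P : PCtx) : IsVal v → PCtx.Wf P → PCtx.Wf (.appR v P)

/-- All variable names occurring in a pure context. -/
def PCtx.vars : PCtx → List String
  | .hole => []
  | .appL P e => P.vars ++ e.vars
  | .appR v P => v.vars ++ P.vars

/-- General evaluation contexts `E ::= [] | E e | v E | ⟨E⟩`. -/
inductive ECtx : Type where
  | hole : ECtx
  | appL : ECtx → Tm → ECtx
  | appR : Tm → ECtx → ECtx
  | prompt : ECtx → ECtx

/-- Plugging an expression into a general context. -/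
def ECtx.plug : ECtx → Tm → Tm
  | .hole, e => e
  | .appL E e₂, e => .app (E.plug e) e₂
  | .appR v E, e => .app v (E.plug e)
  | .prompt E, e => .prompt (E.plug e)

/-- Well-formedness of general contexts: in `v E`, `v` is a value. -/
inductive ECtx.Wf : ECtx → Prop where
  | hole : ECtx.Wf .hole
  | appL (E : ECtx) (e : Tm) : ECtx.Wf E → ECtx.Wf (.appL E e)
  | appR (v : Tm) (E : ECtx) : IsVal v → ECtx.Wf E → ECtx.Wf (.appR v E)
  | prompt (E : ECtx) : ECtx.Wf E → ECtx.Wf (.prompt E)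

/-- Reduction of λF. -/
inductive Step : Tm → Tm → Prop where
  | beta (E : ECtx) (x : String) (e v : Tm) :
      E.Wf → IsVal v →
      Step (E.plug (.app (.lam x e) v)) (E.plug (subst e x v))
  | control (E : ECtx) (P : PCtx) (k : String) (e : Tm) (x : String) :
      E.Wf → P.Wf → x ∉ P.vars →
      Step (E.plug (.prompt (P.plug (.control k e))))
           (E.plug (.prompt (subst e k (.lam x (P.plug (.var x))))))
  | prompt (E : ECtx) (v : Tm) :
      E.Wf → IsVal v →
      Step (E.plug (.prompt v)) (E.plug v)

/-- Reflexive transitive closure of reduction. -/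
def Steps : Tm → Tm → Prop := Relation.ReflTransGen Step

/-! ## Types and the fine-grained type system of λF -/

mutual
/-- Fine-grained λF expression types
    `τ ::= ι | (τ₁ → τ₂ @ μα α μβ β) | (τ₁ →p τ₂)`. -/
inductive FTy : Type where
  | base : Nat → FTy
  | arrow : FTy → FTy → FTr → FTy → FTr → FTy → FTy
  | parrow : FTy → FTy → FTy

/-- Fine-grained λF trail types `μ ::= • | (τ ⇒⟨μ⟩ τ′)`. -/
inductive FTr : Type where
  | empty : FTr
  | cons : FTy → FTr → FTy → FTr
end

/-- `id-cont-type τ μ τ′`. -/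
def FIdContType : FTy → FTr → FTy → Prop
  | τ, .empty, τ' => τ = τ'
  | τ, .cons τ₁ μ₁ τ₁', τ' => τ = τ₁ ∧ τ' = τ₁' ∧ μ₁ = .empty

/-- `compatible μ₁ μ₂ μ₃`. -/
inductive FCompatible : FTr → FTr → FTr → Prop where
  | empty (μ : FTr) : FCompatible .empty μ μ
  | consEmpty (τ₁ : FTy) (μ₁ : FTr) (τ₁' : FTy) :
      FCompatible (.cons τ₁ μ₁ τ₁') .empty (.cons τ₁ μ₁ τ₁')
  | consCons (τ₁ : FTy) (μ₁ : FTr) (τ₁' : FTy) (μ₂ μ₃ : FTr) :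
      FCompatible μ₂ μ₃ μ₁ →
      FCompatible (.cons τ₁ μ₁ τ₁') μ₂ (.cons τ₁ μ₃ τ₁')

/-- Fine-grained typing contexts. -/
abbrev FCtx := List (String × FTy)

/-- Context lookup (with shadowing). -/
inductive FLookup : FCtx → String → FTy → Prop where
  | here (Γ : FCtx) (x : String) (τ : FTy) : FLookup ((x, τ) :: Γ) x τ
  | there (Γ : FCtx) (x y : String) (τ τ' : FTy) :
      x ≠ y → FLookup Γ x τ → FLookup ((y, τ') :: Γ) x τ

mutual
/-- The pure judgment `Γ ⊢p e : τ` of the fine-grained λF. -/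
inductive HasTypeP : FCtx → Tm → FTy → Prop where
  | const (Γ : FCtx) (ι n : Nat) : HasTypeP Γ (.const ι n) (.base ι)
  | var (Γ : FCtx) (x : String) (τ : FTy) :
      FLookup Γ x τ → HasTypeP Γ (.var x) τ
  | pabs (Γ : FCtx) (x : String) (e : Tm) (τ₁ τ₂ : FTy) :
      HasTypeP ((x, τ₁) :: Γ) e τ₂ →
      HasTypeP Γ (.lam x e) (.parrow τ₁ τ₂)
  | iabs (Γ : FCtx) (x : String) (e : Tm) (τ₁ τ₂ : FTy) (μα : FTr) (α : FTy)
      (μβ : FTr) (β : FTy) :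
      HasTypeI ((x, τ₁) :: Γ) e τ₂ μα α μβ β →
      HasTypeP Γ (.lam x e) (.arrow τ₁ τ₂ μα α μβ β)
  | papp (Γ : FCtx) (e₁ e₂ : Tm) (τ₁ τ₂ : FTy) :
      HasTypeP Γ e₁ (.parrow τ₁ τ₂) → HasTypeP Γ e₂ τ₁ →
      HasTypeP Γ (.app e₁ e₂) τ₂
  | pprompt (Γ : FCtx) (e : Tm) (τ : FTy) :
      HasTypeP Γ e τ → HasTypeP Γ (.prompt e) τ
  | iprompt (Γ : FCtx) (e : Tm) (β : FTy) (μi : FTr) (β' τ : FTy) :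
      HasTypeI Γ e β μi β' .empty τ →
      FIdContType β μi β' →
      HasTypeP Γ (.prompt e) τ

/-- The impure judgment `Γ ⊢ e : τ @ μα α / μβ β` of the fine-grained λF. -/
inductive HasTypeI : FCtx → Tm → FTy → FTr → FTy → FTr → FTy → Prop where
  | piapp (Γ : FCtx) (e₁ e₂ : Tm) (τ₁ τ₂ : FTy) (μα : FTr) (α : FTy)
      (μβ : FTr) (β : FTy) (μγ : FTr) (γ : FTy) :
      HasTypeI Γ e₁ (.parrow τ₁ τ₂) μα α μβ β →
      HasTypeI Γ e₂ τ₁ μγ γ μα α →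
      HasTypeI Γ (.app e₁ e₂) τ₂ μγ γ μβ β
  | iapp (Γ : FCtx) (e₁ e₂ : Tm) (τ₁ τ₂ : FTy) (μα : FTr) (α : FTy)
      (μβ : FTr) (β : FTy) (μγ : FTr) (γ : FTy) (μδ : FTr) (δ : FTy) :
      HasTypeI Γ e₁ (.arrow τ₁ τ₂ μα α μβ β) μγ γ μδ δ →
      HasTypeI Γ e₂ τ₁ μβ β μγ γ →
      HasTypeI Γ (.app e₁ e₂) τ₂ μα α μδ δ
  | pcontrol (Γ : FCtx) (k : String) (e : Tm) (τ α γ : FTy) (μi : FTr)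
      (γ' β : FTy) (μα : FTr) :
      HasTypeI ((k, .parrow τ α) :: Γ) e γ μi γ' .empty β →
      FIdContType γ μi γ' →
      HasTypeI Γ (.control k e) τ μα α μα β
  | icontrol (Γ : FCtx) (k : String) (e : Tm) (τ τ₁ : FTy) (μ₁ : FTr)
      (τ₁' : FTy) (μ₂ μ₀ : FTr) (α β γ : FTy) (μi : FTr) (γ' : FTy) (μα μβ : FTr) :
      HasTypeI ((k, .arrow τ τ₁ μ₁ τ₁' μ₂ α) :: Γ) e γ μi γ' .empty β →
      FIdContType γ μi γ' →
      FCompatible (.cons τ₁ μ₁ τ₁') μ₂ μ₀ →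
      FCompatible μβ μ₀ μα →
      HasTypeI Γ (.control k e) τ μα α μβ β
  | exp (Γ : FCtx) (e : Tm) (τ : FTy) (μα : FTr) (α : FTy) :
      HasTypeP Γ e τ →
      HasTypeI Γ e τ μα α μα α
end

/-! ## Auxiliary lemmas -/

/-- Composition of general contexts: `(E₁.comp E₂).plug e = E₁.plug (E₂.plug e)`. -/
def ECtx.comp : ECtx → ECtx → ECtx
  | .hole, E₂ => E₂
  | .appL E t, E₂ => .appL (E.comp E₂) t
  | .appR v E, E₂ => .appR v (E.comp E₂)
  | .prompt E, E₂ => .prompt (E.comp E₂)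

lemma ECtx.comp_plug (E₁ E₂ : ECtx) (e : Tm) :
    (E₁.comp E₂).plug e = E₁.plug (E₂.plug e) := by
  induction E₁ <;> simp [ECtx.comp, ECtx.plug, *]

lemma ECtx.comp_wf {E₁ E₂ : ECtx} (h₁ : E₁.Wf) (h₂ : E₂.Wf) : (E₁.comp E₂).Wf := by
  induction h₁ with
  | hole => exact h₂
  | appL E e _ ih => exact .appL _ _ ih
  | appR v E hv _ ih => exact .appR _ _ hv ih
  | prompt E _ ih => exact .prompt _ ih

/-- Reduction is closed under evaluation contexts. -/
lemma step_ctx {e e' : Tm} (E : ECtx) (hE : E.Wf) (h : Step e e') :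
    Step (E.plug e) (E.plug e') := by
  cases h with
  | beta E₀ x e₀ v h₀ hv =>
      rw [← ECtx.comp_plug, ← ECtx.comp_plug]
      exact Step.beta (E.comp E₀) x e₀ v (ECtx.comp_wf hE h₀) hv
  | control E₀ P k e₀ x h₀ hP hx =>
      rw [← ECtx.comp_plug, ← ECtx.comp_plug]
      exact Step.control (E.comp E₀) P k e₀ x (ECtx.comp_wf hE h₀) hP hx
  | prompt E₀ v h₀ hv =>
      rw [← ECtx.comp_plug, ← ECtx.comp_plug]
      exact Step.prompt (E.comp E₀) v (ECtx.comp_wf hE h₀) hv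

/-- There is always a fresh variable name. -/
lemma exists_fresh (l : List String) : ∃ x, x ∉ l := by
  obtain ⟨x, hx⟩ := Infinite.exists_notMem_finset l.toFinset
  exact ⟨x, fun h => hx (List.mem_toFinset.mpr h)⟩

/-- A value typed by the impure judgment is typed by the pure judgment. -/
lemma valI {Γ : FCtx} {v : Tm} {τ : FTy} {μα : FTr} {α : FTy} {μβ : FTr} {β : FTy}
    (hv : IsVal v) (ht : HasTypeI Γ v τ μα α μβ β) : HasTypeP Γ v τ := by
  cases ht with
  | piapp => cases hv
  | iapp => cases hv
  | pcontrol => cases hv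
  | icontrol => cases hv
  | exp _ _ _ _ _ h => exact h

/-- Canonical forms: a closed value of pure arrow type is a λ-abstraction. -/
lemma canonical_parrow {v : Tm} {τ₁ τ₂ : FTy}
    (ht : HasTypeP [] v (.parrow τ₁ τ₂)) (hv : IsVal v) : ∃ x e, v = .lam x e := by
  cases ht with
  | var _ _ _ h => cases h
  | pabs Γ x e _ _ _ => exact ⟨x, e, rfl⟩
  | papp => cases hv
  | pprompt => cases hv
  | iprompt => cases hv

/-- Canonical forms: a closed value of impure arrow type is a λ-abstraction. -/
lemma canonical_arrow {v : Tm} {τ₁ τ₂ : FTy} {μα : FTr} {α : FTy} {μβ : FTr} {β : FTy}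
    (ht : HasTypeP [] v (.arrow τ₁ τ₂ μα α μβ β)) (hv : IsVal v) :
    ∃ x e, v = .lam x e := by
  cases ht with
  | var _ _ _ h => cases h
  | iabs Γ x e _ _ _ _ _ _ _ => exact ⟨x, e, rfl⟩
  | papp => cases hv
  | pprompt => cases hv
  | iprompt => cases hv

/-- A closed redex `(λx.e) v` steps (at the top level). -/
lemma step_beta_top (x : String) (e v : Tm) (hv : IsVal v) :
    Step (.app (.lam x e) v) (subst e x v) :=
  Step.beta .hole x e v .hole hv

/-- Progress for both judgments, by induction on the term. -/
lemma progress_all (e : Tm) :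
    (∀ τ, HasTypeP [] e τ → IsVal e ∨ ∃ e', Step e e') ∧
    (∀ τ μα α μβ β, HasTypeI [] e τ μα α μβ β →
      IsVal e ∨ (∃ e', Step e e') ∨
      ∃ P k e₀, PCtx.Wf P ∧ e = PCtx.plug P (.control k e₀)) := by
  induction e with
  | const ι n =>
      refine ⟨fun τ _ => Or.inl (.const ι n), fun τ μα α μβ β _ => Or.inl (.const ι n)⟩
  | var x =>
      refine ⟨fun τ _ => Or.inl (.var x), fun τ μα α μβ β _ => Or.inl (.var x)⟩
  | lam x e ih =>
      refine ⟨fun τ _ => Or.inl (.lam x e), fun τ μα α μβ β _ => Or.inl (.lam x e)⟩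
  | app e₁ e₂ ih₁ ih₂ =>
      constructor
      · intro τ ht
        cases ht with
        | papp _ _ _ τ₁ _ h₁ h₂ =>
          rcases ih₁.1 _ h₁ with hv₁ | ⟨e₁', hs₁⟩
          · obtain ⟨x, e₀, rfl⟩ := canonical_parrow h₁ hv₁
            rcases ih₂.1 _ h₂ with hv₂ | ⟨e₂', hs₂⟩
            · exact Or.inr ⟨_, step_beta_top x e₀ e₂ hv₂⟩
            · exact Or.inr ⟨_, step_ctx (.appR (.lam x e₀) .hole)
                (.appR _ _ hv₁ .hole) hs₂⟩
          · exact Or.inr ⟨_, step_ctx (.appL .hole e₂) (.appL _ _ .hole) hs₁⟩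
      · intro τ μα α μβ β ht
        have hdec : ∀ {τa τb : FTy} {μa : FTr} {a : FTy} {μb : FTr} {b : FTy}
            {μc : FTr} {c : FTy},
            HasTypeI [] e₁ τa μa a μb b → HasTypeI [] e₂ τb μc c μa a →
            (IsVal e₁ → HasTypeP [] e₁ τa → ∃ x e₀, e₁ = Tm.lam x e₀) →
            (∃ e', Step (Tm.app e₁ e₂) e') ∨
            ∃ P k e₀, PCtx.Wf P ∧ Tm.app e₁ e₂ = PCtx.plug P (.control k e₀) := by
          intro τa τb μa a μb b μc c h₁ h₂ hcan
          rcases ih₁.2 _ _ _ _ _ h₁ with hv₁ | ⟨e₁', hs₁⟩ | ⟨P, k, e₀, hP, rfl⟩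
          · obtain ⟨x, e₀, rfl⟩ := hcan hv₁ (valI hv₁ h₁)
            rcases ih₂.2 _ _ _ _ _ h₂ with hv₂ | ⟨e₂', hs₂⟩ | ⟨P, k, ec, hP, rfl⟩
            · exact Or.inl ⟨_, step_beta_top x e₀ e₂ hv₂⟩
            · exact Or.inl ⟨_, step_ctx (.appR (.lam x e₀) .hole)
                (.appR _ _ hv₁ .hole) hs₂⟩
            · exact Or.inr ⟨.appR (.lam x e₀) P, k, ec, .appR _ _ hv₁ hP, rfl⟩
          · exact Or.inl ⟨_, step_ctx (.appL .hole e₂) (.appL _ _ .hole) hs₁⟩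
          · exact Or.inr ⟨.appL P e₂, k, e₀, .appL _ _ hP, rfl⟩
        cases ht with
        | piapp _ _ _ τ₁ _ _ _ _ _ _ _ h₁ h₂ =>
            exact Or.inr (hdec h₁ h₂ fun hv hp => canonical_parrow hp hv)
        | iapp _ _ _ _ _ _ _ _ _ _ _ _ _ h₁ h₂ =>
            exact Or.inr (hdec h₁ h₂ fun hv hp => canonical_arrow hp hv)
        | exp _ _ _ _ _ h =>
            cases h with
            | papp _ _ _ τ₁ _ h₁ h₂ =>
              rcases ih₁.1 _ h₁ with hv₁ | ⟨e₁', hs₁⟩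
              · obtain ⟨x, e₀, rfl⟩ := canonical_parrow h₁ hv₁
                rcases ih₂.1 _ h₂ with hv₂ | ⟨e₂', hs₂⟩
                · exact Or.inr (Or.inl ⟨_, step_beta_top x e₀ e₂ hv₂⟩)
                · exact Or.inr (Or.inl ⟨_, step_ctx (.appR (.lam x e₀) .hole)
                    (.appR _ _ hv₁ .hole) hs₂⟩)
              · exact Or.inr (Or.inl ⟨_, step_ctx (.appL .hole e₂)
                  (.appL _ _ .hole) hs₁⟩)
  | control k e ih =>
      constructor
      · intro τ ht
        cases ht
      · intro τ μα α μβ β ht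
        exact Or.inr (Or.inr ⟨.hole, k, e, .hole, rfl⟩)
  | prompt e ih =>
      have key : ∀ {τa : FTy} {μa : FTr} {a : FTy} {μb : FTr} {b : FTy},
          HasTypeI [] e τa μa a μb b → ∃ e', Step (Tm.prompt e) e' := by
        intro τa μa a μb b h
        rcases ih.2 _ _ _ _ _ h with hv | ⟨e', hs⟩ | ⟨P, k, e₀, hP, rfl⟩
        · exact ⟨_, Step.prompt .hole e .hole hv⟩
        · exact ⟨_, step_ctx (.prompt .hole) (.prompt _ .hole) hs⟩
        · obtain ⟨x, hx⟩ := exists_fresh P.vars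
          exact ⟨_, Step.control .hole P k e₀ x .hole hP hx⟩
      constructor
      · intro τ ht
        cases ht with
        | pprompt _ _ _ h => exact Or.inr (key (HasTypeI.exp _ _ _ .empty τ h))
        | iprompt _ _ _ _ _ _ h _ => exact Or.inr (key h)
      · intro τ μα α μβ β ht
        cases ht with
        | exp _ _ _ _ _ h =>
            cases h with
            | pprompt _ _ _ h' =>
                exact Or.inr (Or.inl (key (HasTypeI.exp _ _ _ .empty τ h')))
            | iprompt _ _ _ _ _ _ h' _ => exact Or.inr (Or.inl (key h'))

/-- **Progress for the fine-grained λF**: if `∅ ⊢p e : τ`, then either `e` is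
    a value or there exists `e′` with `e ⇝ e′`. -/
theorem progress_fg (e : Tm) (τ : FTy) (ht : HasTypeP [] e τ) :
    IsVal e ∨ ∃ e', Step e e' :=
  (progress_all e).1 τ ht

end LambdaF
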